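/- arXiv:2203.00072 — 3 statements merged into one kernel-verified Lean document; each statement's English description precedes it below -/
import Mathlib

section
/- There is an inclusion-preserving bijection between 𝒯-indexing systems ℐ (subcategories of 𝒯 containing the maximal subgroupoid, closed under composition and under base-change in the sense that for any commutative square with W' → V' over W → V such that W' → V' ×_V W is a summand inclusion, membership of W → V in ℐ implies membership of W' → V') and subcategories Ī of Fin_𝒯 that (1) contain all isomorphisms, (2) are closed under base-change and binary coproducts of morphisms, and (3) contain all fold maps. The bijection sends Ī to Ī ∩ 𝒯 (morphisms with orbit target) and ℐ to its closure under coproducts and composition with fold maps. -/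
open CategoryTheory CategoryTheory.Limits

universe u v

namespace ParamOperads

variable {D : Type u} [Category.{v} D]

/-- A morphism is a *summand inclusion* if it is one leg of a binary coproduct cocone. -/
def IsSummandInclusion {A B : D} (i : A ⟶ B) : Prop :=
  ∃ (C : D) (c : C ⟶ B), Nonempty (IsColimit (BinaryCofan.mk i c))

/-- Data exhibiting the category `D` as the finite coproduct completion of its
subcategory of orbits: every object decomposes as a finite coproduct of orbits,
and orbits are connected (every map from an orbit into a finite coproduct factors
through one of the summands). -/
structure CoprodCompletion (D : Type u) [Category.{v} D] where
  IsOrbit : D → Prop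
  decomp : ∀ X : D, ∃ (n : ℕ) (obj : Fin n → D) (ι : ∀ i, obj i ⟶ X),
      (∀ i, IsOrbit (obj i)) ∧ Nonempty (IsColimit (Cofan.mk X ι))
  orbit_connected : ∀ {W X : D}, IsOrbit W →
      ∀ (n : ℕ) (obj : Fin n → D) (ι : ∀ i, obj i ⟶ X),
        Nonempty (IsColimit (Cofan.mk X ι)) →
        ∀ f : W ⟶ X, ∃ (i : Fin n) (g : W ⟶ obj i), g ≫ ι i = f

/-- Atomicity: every morphism between orbits admitting a left inverse is an isomorphism. -/
def Atomic (S : CoprodCompletion D) : Prop :=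
  ∀ {V W : D}, S.IsOrbit V → S.IsOrbit W →
    ∀ f : V ⟶ W, (∃ r : W ⟶ V, f ≫ r = 𝟙 V) → IsIso f

/-- A *fold map* is a morphism isomorphic to a finite coproduct of codiagonals of
copies of orbits (possibly empty families). -/
def IsFoldMapP (Orb : D → Prop) {U U' : D} (α : U ⟶ U') : Prop :=
  ∃ (n : ℕ) (W : Fin n → D) (k : Fin n → ℕ)
    (ι' : ∀ i, W i ⟶ U') (ι : ∀ p : Σ i : Fin n, Fin (k i), W p.1 ⟶ U),
    (∀ i, Orb (W i)) ∧
    Nonempty (IsColimit (Cofan.mk U' ι')) ∧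
    Nonempty (IsColimit (Cofan.mk U ι)) ∧
    ∀ p, ι p ≫ α = ι' p.1

/-- Fold maps relative to a coproduct-completion structure. -/
def IsFoldMap (S : CoprodCompletion D) {U U' : D} (α : U ⟶ U') : Prop :=
  IsFoldMapP S.IsOrbit α


/-- A `𝒯`-indexing system: a class of morphisms between orbits containing all
isomorphisms, closed under composition and under base-change along summand
inclusions. -/
structure IndexingSystem (S : CoprodCompletion D) where
  mem : ∀ {V W : D}, (V ⟶ W) → Prop
  orbits : ∀ {V W : D} (f : V ⟶ W), mem f → S.IsOrbit V ∧ S.IsOrbit W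
  iso_mem : ∀ {V W : D} (f : V ⟶ W), S.IsOrbit V → S.IsOrbit W → IsIso f → mem f
  comp_mem : ∀ {V W X : D} (f : V ⟶ W) (g : W ⟶ X), mem f → mem g → mem (f ≫ g)
  base_change : ∀ {W' V' W V P : D} (g : W' ⟶ V') (f : W ⟶ V) (a : W' ⟶ W)
      (b : V' ⟶ V) (p₁ : P ⟶ V') (p₂ : P ⟶ W) (s : W' ⟶ P),
      S.IsOrbit W' → S.IsOrbit V' →
      IsPullback p₁ p₂ b f → s ≫ p₁ = g → s ≫ p₂ = a → IsSummandInclusion s →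
      mem f → mem g

/-- A subcategory of `Fin_𝒯` containing all isomorphisms, closed under composition,
base-change and binary coproducts of morphisms, and containing all fold maps. -/
structure FinIndexingSystem (S : CoprodCompletion D) where
  mem : ∀ {V W : D}, (V ⟶ W) → Prop
  iso_mem : ∀ {V W : D} (f : V ⟶ W), IsIso f → mem f
  comp_mem : ∀ {V W X : D} (f : V ⟶ W) (g : W ⟶ X), mem f → mem g → mem (f ≫ g)
  base_change : ∀ {P X Y Z : D} (p₁ : P ⟶ X) (p₂ : P ⟶ Y) (b : X ⟶ Z) (f : Y ⟶ Z),
      IsPullback p₁ p₂ b f → mem f → mem p₁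
  coprod_mem : ∀ {A B A' B' X X' : D} (f : A ⟶ A') (g : B ⟶ B')
      (ia : A ⟶ X) (ib : B ⟶ X) (ia' : A' ⟶ X') (ib' : B' ⟶ X') (h : X ⟶ X'),
      Nonempty (IsColimit (BinaryCofan.mk ia ib)) →
      Nonempty (IsColimit (BinaryCofan.mk ia' ib')) →
      ia ≫ h = f ≫ ia' → ib ≫ h = g ≫ ib' →
      mem f → mem g → mem h
  fold_mem : ∀ {U U' : D} (α : U ⟶ U'), IsFoldMap S α → mem α


section Aux

variable {D : Type u} [Category.{v} D]

/-- Transport a colimit cofan along an equivalence of index types. -/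
noncomputable def cofanReindex {I J : Type} (e : I ≃ J) {W : J → D} {X : D} {ι : ∀ j, W j ⟶ X}
    (hc : IsColimit (Cofan.mk X ι)) :
    IsColimit (Cofan.mk X (fun i => ι (e i)) : Cofan (fun i => W (e i))) := by
  refine mkCofanColimit _ (fun t => hc.desc (Cofan.mk t.pt (fun j =>
      eqToHom (congrArg W (e.apply_symm_apply j).symm) ≫ t.inj (e.symm j)))) ?_ ?_
  · intro t i
    have h := hc.fac (Cofan.mk t.pt (fun j =>
      eqToHom (congrArg W (e.apply_symm_apply j).symm) ≫ t.inj (e.symm j))) ⟨e i⟩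
    dsimp at h ⊢
    rw [h]
    have key : ∀ (i' : I) (hh : i' = i),
        eqToHom (congrArg (fun x => W (e x)) hh.symm) ≫ t.inj i' = t.inj i := by
      rintro i' rfl; simp
    exact key _ (e.symm_apply_apply i)
  · intro t m hm
    refine hc.hom_ext ?_
    rintro ⟨j⟩
    have h := hc.fac (Cofan.mk t.pt (fun j =>
      eqToHom (congrArg W (e.apply_symm_apply j).symm) ≫ t.inj (e.symm j))) ⟨j⟩
    dsimp at h ⊢
    rw [h]
    have key : ∀ (j₀ : J) (hh : e (e.symm j) = j₀),
        ι j₀ ≫ m = eqToHom (congrArg W hh.symm) ≫ t.inj (e.symm j) := by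
      rintro j₀ rfl
      simpa using hm (e.symm j)
    exact key j (e.apply_symm_apply j)

/-- The singleton cofan on an object is colimit. -/
noncomputable def singletonCofanColimit (X : D) :
    IsColimit (Cofan.mk X (fun _ : Fin 1 => 𝟙 X)) := by
  refine mkCofanColimit _ (fun t => t.inj 0) ?_ ?_
  · intro t i
    have : i = 0 := Subsingleton.elim _ _
    subst this; simp [Cofan.inj]
  · intro t m hm
    simpa [Cofan.inj] using hm 0

/-- An empty cofan on an initial object is colimit. -/
noncomputable def emptyCofanColimit {I : Type} [IsEmpty I] {W : I → D} {X : D} (hX : IsInitial X)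
    (ι : ∀ i, W i ⟶ X) : IsColimit (Cofan.mk X ι) := by
  refine mkCofanColimit _ (fun t => hX.to t.pt) (fun t i => isEmptyElim i) ?_
  · intro t m _
    exact hX.hom_ext _ _

/-- The apex of a colimit empty cofan is initial. -/
noncomputable def initialOfEmptyCofan {I : Type} [IsEmpty I] {W : I → D} {X : D} {ι : ∀ i, W i ⟶ X}
    (hc : IsColimit (Cofan.mk X ι)) : IsInitial X :=
  IsInitial.ofUniqueHom (fun Y => hc.desc (Cofan.mk Y (fun i => isEmptyElim i)))
    (fun Y m => hc.hom_ext (fun ⟨i⟩ => isEmptyElim i))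

/-- Composing a colimit cofan with an isomorphism. -/
noncomputable def cofanCompIso {I : Type} {W : I → D} {X Y : D} {ι : ∀ i, W i ⟶ X}
    (hc : IsColimit (Cofan.mk X ι)) (f : X ⟶ Y) [IsIso f] :
    IsColimit (Cofan.mk Y (fun i => ι i ≫ f)) := by
  refine mkCofanColimit _ (fun t => inv f ≫ hc.desc (Cofan.mk t.pt t.inj)) ?_ ?_
  · intro t i
    have := Cofan.IsColimit.fac hc t.inj i
    dsimp [Cofan.inj] at this ⊢
    simp [Cofan.IsColimit.desc] at this ⊢
    simp [this]
  · intro t m hm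
    rw [IsIso.eq_inv_comp]
    refine hc.hom_ext ?_
    rintro ⟨i⟩
    have := hm i
    dsimp [Cofan.inj] at this ⊢
    rw [← Category.assoc, this]
    exact (Cofan.IsColimit.fac hc t.inj i).symm

/-- Combining two cofans along a binary cofan. -/
noncomputable def combineCofan {I I' : Type} {A B X : D} {W : I → D} {ιW : ∀ i, W i ⟶ A}
    {V : I' → D} {ιV : ∀ i, V i ⟶ B} {ia : A ⟶ X} {ib : B ⟶ X}
    (hA : IsColimit (Cofan.mk A ιW)) (hB : IsColimit (Cofan.mk B ιV))
    (hX : IsColimit (BinaryCofan.mk ia ib)) :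
    IsColimit (Cofan.mk X (fun p : I ⊕ I' =>
      Sum.rec (motive := fun p => Sum.elim W V p ⟶ X)
        (fun i => ιW i ≫ ia) (fun i' => ιV i' ≫ ib) p)) := by
  refine mkCofanColimit _ (fun t => hX.desc (BinaryCofan.mk
      (hA.desc (Cofan.mk t.pt (fun i => t.inj (.inl i))))
      (hB.desc (Cofan.mk t.pt (fun i' => t.inj (.inr i')))))) ?_ ?_
  · intro t p
    have hl := hX.fac (BinaryCofan.mk
      (hA.desc (Cofan.mk t.pt (fun i => t.inj (.inl i))))
      (hB.desc (Cofan.mk t.pt (fun i' => t.inj (.inr i'))))) ⟨WalkingPair.left⟩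
    have hr := hX.fac (BinaryCofan.mk
      (hA.desc (Cofan.mk t.pt (fun i => t.inj (.inl i))))
      (hB.desc (Cofan.mk t.pt (fun i' => t.inj (.inr i'))))) ⟨WalkingPair.right⟩
    simp only [BinaryCofan.mk_pt, BinaryCofan.ι_app_left, BinaryCofan.ι_app_right,
      BinaryCofan.mk_inl, BinaryCofan.mk_inr] at hl hr
    rcases p with i | i'
    · show (ιW i ≫ ia) ≫ _ = t.inj (Sum.inl i)
      erw [Category.assoc, hl]
      exact hA.fac (Cofan.mk t.pt (fun i => t.inj (.inl i))) ⟨i⟩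
    · show (ιV i' ≫ ib) ≫ _ = t.inj (Sum.inr i')
      erw [Category.assoc, hr]
      exact hB.fac (Cofan.mk t.pt (fun i' => t.inj (.inr i'))) ⟨i'⟩
  · intro t m hm
    refine BinaryCofan.IsColimit.hom_ext hX ?_ ?_
    · erw [hX.fac _ ⟨WalkingPair.left⟩]
      refine hA.hom_ext ?_
      rintro ⟨i⟩
      have h1 := hm (.inl i)
      show ιW i ≫ ia ≫ m = _
      rw [← Category.assoc]
      refine h1.trans ?_
      exact (hA.fac (Cofan.mk t.pt (fun i => t.inj (.inl i))) ⟨i⟩).symm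
    · erw [hX.fac _ ⟨WalkingPair.right⟩]
      refine hB.hom_ext ?_
      rintro ⟨i'⟩
      have h1 := hm (.inr i')
      show ιV i' ≫ ib ≫ m = _
      rw [← Category.assoc]
      refine h1.trans ?_
      exact (hB.fac (Cofan.mk t.pt (fun i' => t.inj (.inr i'))) ⟨i'⟩).symm

end Aux

section Aux2
set_option maxRecDepth 10000

variable {D : Type u} [Category.{v} D]

/-- If `b` is a mono, the square with identity is a pullback. -/
theorem isPullback_id_of_mono {P X Z : D} (p₁ : P ⟶ X) (b : X ⟶ Z) [Mono b] :
    IsPullback p₁ (𝟙 P) b (p₁ ≫ b) := by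
  refine ⟨⟨by simp⟩, ⟨PullbackCone.IsLimit.mk _ (fun s => s.snd) ?_ ?_ ?_⟩⟩
  · intro s
    have h := s.condition
    rw [← Category.assoc] at h
    exact ((cancel_mono b).mp h).symm
  · intro s; simp
  · intro s m h1 h2
    simpa using h2

/-- Pullbacks of summand inclusions are summand inclusions. -/
theorem isSummandInclusion_of_isPullback [FinitaryExtensive D] [HasPullbacks D]
    {U P Q U' : D} {u : U ⟶ P} (hu : IsSummandInclusion u) {e : Q ⟶ P}
    {s : U' ⟶ Q} {a : U' ⟶ U} (hsq : IsPullback s a e u) : IsSummandInclusion s := by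
  obtain ⟨C, w, ⟨hcc⟩⟩ := hu
  have hvk := FinitaryExtensive.vanKampen _ hcc
  rw [BinaryCofan.isVanKampen_iff] at hvk
  have h2 : IsPullback (pullback.fst e w) (pullback.snd e w) e w := IsPullback.of_hasPullback e w
  have := (hvk (BinaryCofan.mk s (pullback.fst e w)) a (pullback.snd e w) e
      (by exact hsq.w.symm) (by exact (pullback.condition (f := e) (g := w)).symm)).mpr
      ⟨hsq, h2⟩
  exact ⟨_, pullback.fst e w, this⟩

variable [HasFiniteCoproducts D]

/-- Splitting off one leg of a finite colimit cofan as a binary coproduct. -/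
noncomputable def splitCofanColimit {I : Type} [Fintype I] [DecidableEq I]
    {f : I → D} {X : D} {g : ∀ i, f i ⟶ X} (hc : IsColimit (Cofan.mk X g)) (i₀ : I) :
    IsColimit (BinaryCofan.mk (g i₀)
      (Sigma.desc (fun j : {j // j ≠ i₀} => g j.1))) := by
  refine BinaryCofan.isColimitMk
    (fun s => hc.desc (Cofan.mk s.pt (fun j =>
      if h : j = i₀ then eqToHom (congrArg f h) ≫ s.inl
      else Sigma.ι (fun j : {j // j ≠ i₀} => f j.1) (⟨j, h⟩ : {j // j ≠ i₀}) ≫ s.inr)))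
    ?_ ?_ ?_
  · intro s
    have h := hc.fac (Cofan.mk s.pt (fun j =>
      if h : j = i₀ then eqToHom (congrArg f h) ≫ s.inl
      else Sigma.ι (fun j : {j // j ≠ i₀} => f j.1) (⟨j, h⟩ : {j // j ≠ i₀}) ≫ s.inr)) ⟨i₀⟩
    simp only [Cofan.mk_pt, Cofan.mk_ι_app] at h
    rw [h, dif_pos trivial]
    simp
    exact Category.id_comp _
  · intro s
    refine Sigma.hom_ext _ _ ?_
    rintro ⟨j, hj⟩
    have h := hc.fac (Cofan.mk s.pt (fun j =>
      if h : j = i₀ then eqToHom (congrArg f h) ≫ s.inl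
      else Sigma.ι (fun j : {j // j ≠ i₀} => f j.1) (⟨j, h⟩ : {j // j ≠ i₀}) ≫ s.inr)) ⟨j⟩
    simp only [Cofan.mk_pt, Cofan.mk_ι_app] at h
    rw [colimit.ι_desc_assoc]
    simp only [Cofan.mk_pt, Cofan.mk_ι_app]
    rw [h]
    rw [dif_neg hj]
  · intro s m h1 h2
    refine hc.hom_ext ?_
    rintro ⟨j⟩
    have h := hc.fac (Cofan.mk s.pt (fun j =>
      if h : j = i₀ then eqToHom (congrArg f h) ≫ s.inl
      else Sigma.ι (fun j : {j // j ≠ i₀} => f j.1) (⟨j, h⟩ : {j // j ≠ i₀}) ≫ s.inr)) ⟨j⟩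
    simp only [Cofan.mk_pt, Cofan.mk_ι_app] at h ⊢
    rw [h]
    by_cases hj : j = i₀
    · subst hj
      rw [dif_pos rfl]
      exact h1.trans (Category.id_comp _).symm
    · rw [dif_neg hj]
      rw [← h2, ← Category.assoc]
      congr 1
      simp

/-- Every leg of a finite colimit cofan is a summand inclusion. -/
theorem cofanLegSummand {I : Type} [Fintype I]
    {f : I → D} {X : D} {g : ∀ i, f i ⟶ X} (hc : IsColimit (Cofan.mk X g)) (i₀ : I) :
    IsSummandInclusion (g i₀) := by
  classical
  exact ⟨_, _, ⟨splitCofanColimit hc i₀⟩⟩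

/-- Legs of finite colimit cofans are monomorphisms (in an extensive category). -/
theorem cofanLegMono [FinitaryExtensive D] {I : Type} [Fintype I]
    {f : I → D} {X : D} {g : ∀ i, f i ⟶ X} (hc : IsColimit (Cofan.mk X g)) (i : I) :
    Mono (g i) :=
  FinitaryExtensive.mono_ι hc ⟨i⟩

/-- A binary cofan whose second leg comes from an initial object is colimit. -/
noncomputable def binaryCofanInitial {A C : D} (hC : IsInitial C) (c : C ⟶ A) :
    IsColimit (BinaryCofan.mk (𝟙 A) c) := by
  refine BinaryCofan.isColimitMk (fun s => s.inl) (fun s => Category.id_comp _) ?_ ?_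
  · intro s
    exact hC.hom_ext _ _
  · intro s m h1 _
    simpa using h1

end Aux2

section Aux3

variable {D : Type u} [Category.{v} D]

/-- No orbit admits a map to an initial object. -/
theorem orbit_to_initial_false (S : CoprodCompletion D) {W X : D} (hW : S.IsOrbit W)
    (hX : IsInitial X) (f : W ⟶ X) : False := by
  obtain ⟨i, -, -⟩ := S.orbit_connected hW 0 (fun i => i.elim0) (fun i => i.elim0)
    ⟨emptyCofanColimit hX _⟩ f
  exact i.elim0

variable [HasFiniteCoproducts D] [FinitaryExtensive D]

/-- Connectedness of orbits, for cofans over arbitrary finite index types. -/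
theorem connected' (S : CoprodCompletion D) {W X : D} (hW : S.IsOrbit W)
    {I : Type} [Fintype I] (obj : I → D) (ι : ∀ i, obj i ⟶ X)
    (hc : IsColimit (Cofan.mk X ι)) (f : W ⟶ X) :
    ∃ (i : I) (g : W ⟶ obj i), g ≫ ι i = f := by
  have e := Fintype.equivFin I
  obtain ⟨a, g, hg⟩ := S.orbit_connected hW (Fintype.card I)
    (fun a => obj (e.symm a)) (fun a => ι (e.symm a)) ⟨cofanReindex e.symm hc⟩ f
  exact ⟨e.symm a, g, hg⟩

/-- A map from an orbit into a finite coproduct factors through a unique summand. -/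
theorem uniq_index (S : CoprodCompletion D) {I : Type} [Fintype I]
    {V : I → D} {Z : D} {κ : ∀ j, V j ⟶ Z} (hc : IsColimit (Cofan.mk Z κ))
    {W : D} (hW : S.IsOrbit W) {j j' : I} (g : W ⟶ V j) (g' : W ⟶ V j')
    (hcomm : g ≫ κ j = g' ≫ κ j') : j = j' := by
  by_contra hne
  have hpb := FinitaryExtensive.isPullback_initial_to hc ⟨j⟩ ⟨j'⟩
    (by simpa using fun h => hne (congrArg Discrete.as h))
  have lift := hpb.lift g g' hcomm
  exact orbit_to_initial_false S hW initialIsInitial lift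

/-- Comparison of two finite orbit decompositions: each summand of one is isomorphic
to a summand of the other, compatibly with the inclusions. -/
theorem compareDecomp (S : CoprodCompletion D) (hat : Atomic S) {X : D}
    {I : Type} [Fintype I] {W : I → D} {ι : ∀ i, W i ⟶ X}
    (horb : ∀ i, S.IsOrbit (W i)) (hc : IsColimit (Cofan.mk X ι))
    {I' : Type} [Fintype I'] {W' : I' → D} {ι' : ∀ i, W' i ⟶ X}
    (horb' : ∀ i, S.IsOrbit (W' i)) (hc' : IsColimit (Cofan.mk X ι')) (i : I) :
    ∃ (i' : I') (u : W i ⟶ W' i'), IsIso u ∧ u ≫ ι' i' = ι i := by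
  obtain ⟨i', u, hu⟩ := connected' S (horb i) W' ι' hc' (ι i)
  obtain ⟨i'', v, hv⟩ := connected' S (horb' i') W ι hc (ι' i')
  have hcomp : (u ≫ v) ≫ ι i'' = 𝟙 (W i) ≫ ι i := by
    rw [Category.assoc, hv, hu, Category.id_comp]
  have hi : i'' = i := uniq_index S hc (horb i) (u ≫ v) (𝟙 (W i)) hcomp
  subst hi
  have : Mono (ι i'') := cofanLegMono hc i''
  have huv : u ≫ v = 𝟙 (W i'') := by
    rw [← cancel_mono (ι i'')]
    exact hcomp
  exact ⟨i', u, hat (horb i'') (horb' i') u ⟨v, huv⟩, hu⟩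

end Aux3

section Main

variable {D : Type u} [Category.{v} D] [HasPullbacks D] [HasFiniteCoproducts D]
  [FinitaryExtensive D] {S : CoprodCompletion D}

/-- Membership in the extension of an indexing system to `Fin_𝒯`. -/
def ExtMem (Idx : IndexingSystem S) {X Y : D} (f : X ⟶ Y) : Prop :=
  ∃ (n m : ℕ) (W : Fin n → D) (ι : ∀ i, W i ⟶ X) (V : Fin m → D) (κ : ∀ j, V j ⟶ Y),
    (∀ i, S.IsOrbit (W i)) ∧ (∀ j, S.IsOrbit (V j)) ∧
    Nonempty (IsColimit (Cofan.mk X ι)) ∧ Nonempty (IsColimit (Cofan.mk Y κ)) ∧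
    ∀ i, ∃ (j : Fin m) (g : W i ⟶ V j), Idx.mem g ∧ g ≫ κ j = ι i ≫ f

theorem extMem_mono {Idx₁ Idx₂ : IndexingSystem S}
    (hmono : ∀ {V W : D} (g : V ⟶ W), Idx₁.mem g → Idx₂.mem g)
    {X Y : D} {f : X ⟶ Y} (h : ExtMem Idx₁ f) : ExtMem Idx₂ f := by
  obtain ⟨n, m, W, ι, V, κ, h1, h2, h3, h4, h5⟩ := h
  exact ⟨n, m, W, ι, V, κ, h1, h2, h3, h4, fun i =>
    let ⟨j, g, hg, hfac⟩ := h5 i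
    ⟨j, g, hmono g hg, hfac⟩⟩

theorem extMem_intro (Idx : IndexingSystem S) {X Y : D} (f : X ⟶ Y)
    {I : Type} [Fintype I] {W : I → D} {ι : ∀ i, W i ⟶ X}
    (horb : ∀ i, S.IsOrbit (W i)) (hc : IsColimit (Cofan.mk X ι))
    {J : Type} [Fintype J] {V : J → D} {κ : ∀ j, V j ⟶ Y}
    (horb' : ∀ j, S.IsOrbit (V j)) (hc' : IsColimit (Cofan.mk Y κ))
    (hcomp : ∀ i, ∃ (j : J) (g : W i ⟶ V j), Idx.mem g ∧ g ≫ κ j = ι i ≫ f) :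
    ExtMem Idx f := by
  have eI := Fintype.equivFin I
  have eJ := Fintype.equivFin J
  refine ⟨Fintype.card I, Fintype.card J, fun a => W (eI.symm a), fun a => ι (eI.symm a),
    fun b => V (eJ.symm b), fun b => κ (eJ.symm b), fun a => horb _, fun b => horb' _,
    ⟨cofanReindex eI.symm hc⟩, ⟨cofanReindex eJ.symm hc'⟩, ?_⟩
  intro a
  obtain ⟨j, g, hg, hfac⟩ := hcomp (eI.symm a)
  refine ⟨eJ j, ?_⟩
  show ∃ g' : W (eI.symm a) ⟶ V (eJ.symm (eJ j)),
    Idx.mem g' ∧ g' ≫ κ (eJ.symm (eJ j)) = ι (eI.symm a) ≫ f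
  rw [eJ.symm_apply_apply]
  exact ⟨g, hg, hfac⟩

theorem extMem_transfer (hat : Atomic S) (Idx : IndexingSystem S) {X Y : D} {f : X ⟶ Y}
    (h : ExtMem Idx f)
    {I : Type} [Fintype I] {W : I → D} {ι : ∀ i, W i ⟶ X}
    (horb : ∀ i, S.IsOrbit (W i)) (hc : IsColimit (Cofan.mk X ι))
    {J : Type} [Fintype J] {V : J → D} {κ : ∀ j, V j ⟶ Y}
    (horb' : ∀ j, S.IsOrbit (V j)) (hc' : IsColimit (Cofan.mk Y κ)) (i : I) :
    ∃ (j : J) (g : W i ⟶ V j), Idx.mem g ∧ g ≫ κ j = ι i ≫ f := by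
  obtain ⟨n, m, W0, ι0, V0, κ0, horb0, horb0', ⟨hc0⟩, ⟨hc0'⟩, hcomp⟩ := h
  obtain ⟨i₀, a, haiso, hafac⟩ := compareDecomp S hat horb hc horb0 hc0 i
  obtain ⟨j₀, g₀, hg₀, hfac₀⟩ := hcomp i₀
  obtain ⟨j, c, hciso, hcfac⟩ := compareDecomp S hat horb0' hc0' horb' hc' j₀
  refine ⟨j, a ≫ g₀ ≫ c, ?_, ?_⟩
  · exact Idx.comp_mem _ _ (Idx.iso_mem a (horb i) (horb0 i₀) haiso)
      (Idx.comp_mem _ _ hg₀ (Idx.iso_mem c (horb0' j₀) (horb' j) hciso))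
  · rw [Category.assoc, Category.assoc, hcfac, hfac₀, ← Category.assoc, hafac]

/-- Any map out of an initial object is a fold map. -/
theorem isFoldMap_of_initial (S : CoprodCompletion D) {A B : D} (hA : IsInitial A)
    (f : A ⟶ B) : IsFoldMap S f := by
  obtain ⟨m, V, κ, horb, ⟨hκ⟩⟩ := S.decomp B
  haveI : IsEmpty (Σ _ : Fin m, Fin 0) := ⟨fun p => p.2.elim0⟩
  exact ⟨m, V, fun _ => 0, κ, fun p => p.2.elim0, horb, ⟨hκ⟩,
    ⟨emptyCofanColimit hA _⟩, fun p => p.2.elim0⟩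

/-- The codiagonal of an object is a fold map. -/
theorem isFoldMap_codiag (S : CoprodCompletion D) (Y : D) :
    IsFoldMap S (coprod.desc (𝟙 Y) (𝟙 Y)) := by
  obtain ⟨m, V, κ, horb, ⟨hκ⟩⟩ := S.decomp Y
  refine ⟨m, V, fun _ => 2, κ,
    fun p => if p.2 = (0 : Fin 2) then κ p.1 ≫ coprod.inl else κ p.1 ≫ coprod.inr,
    horb, ⟨hκ⟩, ⟨?_⟩, ?_⟩
  · refine mkCofanColimit _ (fun t => coprod.desc
      (hκ.desc (Cofan.mk t.pt (fun j => t.inj ⟨j, 0⟩)))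
      (hκ.desc (Cofan.mk t.pt (fun j => t.inj ⟨j, 1⟩)))) ?_ ?_
    · rintro t ⟨j, b⟩
      fin_cases b
      · show (if (0 : Fin 2) = (0 : Fin 2) then κ j ≫ coprod.inl else κ j ≫ coprod.inr) ≫ _
          = t.inj ⟨j, 0⟩
        rw [if_pos rfl, Category.assoc, coprod.inl_desc]
        exact hκ.fac (Cofan.mk t.pt (fun j => t.inj ⟨j, 0⟩)) ⟨j⟩
      · show (if (1 : Fin 2) = (0 : Fin 2) then κ j ≫ coprod.inl else κ j ≫ coprod.inr) ≫ _
          = t.inj ⟨j, 1⟩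
        rw [if_neg (by decide), Category.assoc, coprod.inr_desc]
        exact hκ.fac (Cofan.mk t.pt (fun j => t.inj ⟨j, 1⟩)) ⟨j⟩
    · intro t mm hm
      refine coprod.hom_ext ?_ ?_
      · rw [coprod.inl_desc]
        refine hκ.hom_ext ?_
        rintro ⟨j⟩
        have h0 : (if (0 : Fin 2) = 0 then κ j ≫ coprod.inl else κ j ≫ coprod.inr) ≫ mm
            = t.inj ⟨j, 0⟩ := hm ⟨j, 0⟩
        rw [if_pos rfl, Category.assoc] at h0
        show κ j ≫ coprod.inl ≫ mm = _
        rw [h0]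
        exact (hκ.fac (Cofan.mk t.pt (fun j => t.inj ⟨j, 0⟩)) ⟨j⟩).symm
      · rw [coprod.inr_desc]
        refine hκ.hom_ext ?_
        rintro ⟨j⟩
        have h1 : (if (1 : Fin 2) = 0 then κ j ≫ coprod.inl else κ j ≫ coprod.inr) ≫ mm
            = t.inj ⟨j, 1⟩ := hm ⟨j, 1⟩
        rw [if_neg (show ¬((1 : Fin 2) = 0) by decide), Category.assoc] at h1
        show κ j ≫ coprod.inr ≫ mm = _
        rw [h1]
        exact (hκ.fac (Cofan.mk t.pt (fun j => t.inj ⟨j, 1⟩)) ⟨j⟩).symm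
  · rintro ⟨j, b⟩
    fin_cases b
    · show (if (0 : Fin 2) = (0 : Fin 2) then κ j ≫ coprod.inl else κ j ≫ coprod.inr) ≫ _ = κ j
      rw [if_pos rfl, Category.assoc, coprod.inl_desc, Category.comp_id]
    · show (if (1 : Fin 2) = (0 : Fin 2) then κ j ≫ coprod.inl else κ j ≫ coprod.inr) ≫ _ = κ j
      rw [if_neg (by decide), Category.assoc, coprod.inr_desc, Category.comp_id]

end Main

section Main2

variable {D : Type u} [Category.{v} D] [HasPullbacks D] [HasFiniteCoproducts D]
  [FinitaryExtensive D] {S : CoprodCompletion D}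

theorem finmem_initial (J : FinIndexingSystem S) {A B : D} (hA : IsInitial A)
    (f : A ⟶ B) : J.mem f :=
  J.fold_mem f (isFoldMap_of_initial S hA f)

theorem finmem_summand (J : FinIndexingSystem S) {A B : D} {i : A ⟶ B}
    (h : IsSummandInclusion i) : J.mem i := by
  obtain ⟨C, c, ⟨hcc⟩⟩ := h
  refine J.coprod_mem (𝟙 A) (initial.to C) (𝟙 A) (initial.to A) i c i
    ⟨binaryCofanInitial initialIsInitial (initial.to A)⟩ ⟨hcc⟩ (by simp)
    (initialIsInitial.hom_ext _ _) (J.iso_mem _ inferInstance)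
    (finmem_initial J initialIsInitial _)

theorem finmem_component (J : FinIndexingSystem S) {X Y : D} {f : X ⟶ Y} (hf : J.mem f)
    {I : Type} [Fintype I] {W : I → D} {ι : ∀ i, W i ⟶ X} (hc : IsColimit (Cofan.mk X ι))
    {I' : Type} [Fintype I'] {V : I' → D} {κ : ∀ j, V j ⟶ Y} (hc' : IsColimit (Cofan.mk Y κ))
    {i : I} {j : I'} {g : W i ⟶ V j} (hg : g ≫ κ j = ι i ≫ f) : J.mem g := by
  haveI : Mono (κ j) := cofanLegMono hc' j
  have hpb : IsPullback g (𝟙 _) (κ j) (g ≫ κ j) := isPullback_id_of_mono g (κ j)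
  rw [hg] at hpb
  have hcomp : J.mem (ι i ≫ f) :=
    J.comp_mem _ _ (finmem_summand J (cofanLegSummand hc i)) hf
  exact J.base_change g (𝟙 _) (κ j) (ι i ≫ f) hpb hcomp

theorem finmem_of_components (J : FinIndexingSystem S) {X Y : D} (f : X ⟶ Y)
    {I : Type} [Fintype I] {W : I → D} {ι : ∀ i, W i ⟶ X} (hc : IsColimit (Cofan.mk X ι))
    (h : ∀ i, J.mem (ι i ≫ f)) : J.mem f := by
  suffices aux : ∀ (n : ℕ) {X : D} (f : X ⟶ Y) {I : Type} [Fintype I],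
      Fintype.card I = n → ∀ {W : I → D} (ι : ∀ i, W i ⟶ X),
      IsColimit (Cofan.mk X ι) → (∀ i, J.mem (ι i ≫ f)) → J.mem f by
    exact aux (Fintype.card I) f rfl ι hc h
  intro n
  induction n with
  | zero =>
    intro X f I _ hcard W ι hc h
    haveI : IsEmpty I := Fintype.card_eq_zero_iff.mp hcard
    exact finmem_initial J (initialOfEmptyCofan hc) f
  | succ n IH =>
    intro X f I _ hcard W ι hc h
    classical
    have hne : Nonempty I := Fintype.card_pos_iff.mp (by omega)
    obtain ⟨i₀⟩ := hne
    have hsplit := splitCofanColimit hc i₀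
    set r : (∐ fun j : {j // j ≠ i₀} => W j.1) ⟶ X :=
      Sigma.desc (fun j : {j // j ≠ i₀} => ι j.1) with hr
    have hcard' : Fintype.card {j // j ≠ i₀} = n := by
      have h1 : Fintype.card {j // j = i₀} = 1 := Fintype.card_subtype_eq i₀
      have h2 := Fintype.card_subtype_compl (fun j : I => j = i₀)
      rw [h1, hcard] at h2
      simpa using h2
    have hmemR : J.mem (r ≫ f) := by
      refine IH (r ≫ f) hcard' (Sigma.ι (fun j : {j // j ≠ i₀} => W j.1))
        (coproductIsCoproduct _) ?_
      intro j
      rw [← Category.assoc]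
      have : Sigma.ι (fun j : {j // j ≠ i₀} => W j.1) j ≫ r = ι j.1 := by
        simp [hr]
      rw [this]
      exact h j.1
    have hY2 := coprodIsCoprod Y Y
    set h' : X ⟶ Y ⨿ Y := hsplit.desc
      (BinaryCofan.mk ((ι i₀ ≫ f) ≫ coprod.inl) ((r ≫ f) ≫ coprod.inr)) with hh'
    have hfl : ι i₀ ≫ h' = (ι i₀ ≫ f) ≫ coprod.inl :=
      hsplit.fac _ ⟨WalkingPair.left⟩
    have hfr : r ≫ h' = (r ≫ f) ≫ coprod.inr :=
      hsplit.fac _ ⟨WalkingPair.right⟩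
    have hmemh' : J.mem h' := J.coprod_mem (ι i₀ ≫ f) (r ≫ f) (ι i₀) r coprod.inl
      coprod.inr h' ⟨hsplit⟩ ⟨hY2⟩ hfl hfr (h i₀) hmemR
    have hnabla : J.mem (coprod.desc (𝟙 Y) (𝟙 Y)) :=
      J.fold_mem _ (isFoldMap_codiag S Y)
    have hcompose := J.comp_mem h' _ hmemh' hnabla
    have hfe : h' ≫ coprod.desc (𝟙 Y) (𝟙 Y) = f := by
      refine BinaryCofan.IsColimit.hom_ext hsplit ?_ ?_
      · show ι i₀ ≫ h' ≫ coprod.desc (𝟙 Y) (𝟙 Y) = ι i₀ ≫ f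
        rw [← Category.assoc, hfl, Category.assoc, coprod.inl_desc, Category.comp_id]
      · show r ≫ h' ≫ coprod.desc (𝟙 Y) (𝟙 Y) = r ≫ f
        rw [← Category.assoc, hfr, Category.assoc, coprod.inr_desc, Category.comp_id]
    rwa [hfe] at hcompose

end Main2

section Main3

variable {D : Type u} [Category.{v} D] [HasPullbacks D] [HasFiniteCoproducts D]
  [FinitaryExtensive D] {S : CoprodCompletion D}

/-- Restriction of a subcategory of `Fin_𝒯` to morphisms between orbits. -/
def Restrict (J : FinIndexingSystem S) : IndexingSystem S where
  mem {V W} f := S.IsOrbit V ∧ S.IsOrbit W ∧ J.mem f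
  orbits _ h := ⟨h.1, h.2.1⟩
  iso_mem f hV hW hiso := ⟨hV, hW, J.iso_mem f hiso⟩
  comp_mem _ _ hf hg := ⟨hf.1, hg.2.1, J.comp_mem _ _ hf.2.2 hg.2.2⟩
  base_change g f a b p₁ p₂ s hW' hV' hpb hs1 hs2 hsum hf := by
    refine ⟨hW', hV', ?_⟩
    have h1 : J.mem p₁ := J.base_change p₁ p₂ b f hpb hf.2.2
    have h2 : J.mem s := finmem_summand J hsum
    have h3 := J.comp_mem s p₁ h2 h1
    rwa [hs1] at h3

/-- Extension of an indexing system to a subcategory of `Fin_𝒯`. -/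
def Extend (hat : Atomic S) (Idx : IndexingSystem S) : FinIndexingSystem S where
  mem f := ExtMem Idx f
  iso_mem {X Y} f hiso := by
    obtain ⟨n, W, ι, horb, ⟨hc⟩⟩ := S.decomp X
    haveI := hiso
    refine extMem_intro Idx f horb hc horb (cofanCompIso hc f) ?_
    intro i
    exact ⟨i, 𝟙 (W i), Idx.iso_mem _ (horb i) (horb i) inferInstance, by simp⟩
  comp_mem {X Y Z} f g hf hg := by
    obtain ⟨n, W, ι, horbX, ⟨hcX⟩⟩ := S.decomp X
    obtain ⟨m, T, τ, horbY, ⟨hcY⟩⟩ := S.decomp Y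
    obtain ⟨r, V, κ, horbZ, ⟨hcZ⟩⟩ := S.decomp Z
    refine extMem_intro Idx (f ≫ g) horbX hcX horbZ hcZ ?_
    intro i
    obtain ⟨j, a, ha, hafac⟩ := extMem_transfer hat Idx hf horbX hcX horbY hcY i
    obtain ⟨k, b2, hb2, hbfac⟩ := extMem_transfer hat Idx hg horbY hcY horbZ hcZ j
    refine ⟨k, a ≫ b2, Idx.comp_mem a b2 ha hb2, ?_⟩
    rw [Category.assoc, hbfac, ← Category.assoc, hafac, Category.assoc]
  base_change {P X Y Z} p₁ p₂ b f hpb hf := by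
    obtain ⟨nP, U, μ, horbP, ⟨hcP⟩⟩ := S.decomp P
    obtain ⟨nX, W, ι, horbX, ⟨hcX⟩⟩ := S.decomp X
    obtain ⟨nY, T, τ, horbY, ⟨hcY⟩⟩ := S.decomp Y
    obtain ⟨nZ, V, κ, horbZ, ⟨hcZ⟩⟩ := S.decomp Z
    refine extMem_intro Idx p₁ horbP hcP horbX hcX ?_
    intro a
    obtain ⟨i, q, hq⟩ := connected' S (horbP a) W ι hcX (μ a ≫ p₁)
    refine ⟨i, q, ?_, hq⟩
    obtain ⟨l, t, ht⟩ := connected' S (horbP a) T τ hcY (μ a ≫ p₂)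
    obtain ⟨j₀, hmap, hh⟩ := connected' S (horbX i) V κ hcZ (ι i ≫ b)
    obtain ⟨jl, gl, hgl, hglfac⟩ := extMem_transfer hat Idx hf horbY hcY horbZ hcZ l
    have key : (q ≫ hmap) ≫ κ j₀ = (t ≫ gl) ≫ κ jl := by
      rw [Category.assoc, hh, Category.assoc, hglfac, ← Category.assoc, hq,
        ← Category.assoc, ht, Category.assoc, Category.assoc, hpb.w]
    have hj : j₀ = jl := uniq_index S hcZ (horbP a) (q ≫ hmap) (t ≫ gl) key
    subst hj
    haveI : Mono (κ j₀) := cofanLegMono hcZ j₀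
    have hqh : q ≫ hmap = t ≫ gl := by
      rw [← cancel_mono (κ j₀)]; exact key
    have hQ : IsPullback (pullback.fst hmap gl) (pullback.snd hmap gl) hmap gl :=
      IsPullback.of_hasPullback hmap gl
    set s : U a ⟶ pullback hmap gl := pullback.lift q t hqh with hs
    have hcomm : (pullback.fst hmap gl ≫ ι i) ≫ b = (pullback.snd hmap gl ≫ τ l) ≫ f := by
      rw [Category.assoc, Category.assoc, ← hh, ← hglfac, ← Category.assoc,
        ← Category.assoc, pullback.condition]
    set e : pullback hmap gl ⟶ P := hpb.lift (pullback.fst hmap gl ≫ ι i)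
      (pullback.snd hmap gl ≫ τ l) hcomm with he
    have he1 : e ≫ p₁ = pullback.fst hmap gl ≫ ι i := hpb.lift_fst _ _ _
    have he2 : e ≫ p₂ = pullback.snd hmap gl ≫ τ l := hpb.lift_snd _ _ _
    haveI hmonoι : Mono (ι i) := cofanLegMono hcX i
    haveI hmonoτ : Mono (τ l) := cofanLegMono hcY l
    haveI hmonoe : Mono e := by
      refine ⟨fun {T'} t₁ t₂ hteq => ?_⟩
      refine hQ.hom_ext ?_ ?_
      · rw [← cancel_mono (ι i), Category.assoc, Category.assoc, ← he1]
        rw [← Category.assoc, ← Category.assoc, hteq]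
      · rw [← cancel_mono (τ l), Category.assoc, Category.assoc, ← he2]
        rw [← Category.assoc, ← Category.assoc, hteq]
    have hse : s ≫ e = μ a := by
      refine hpb.hom_ext ?_ ?_
      · rw [Category.assoc, he1, ← Category.assoc, hs, pullback.lift_fst, hq]
      · rw [Category.assoc, he2, ← Category.assoc, hs, pullback.lift_snd, ht]
    have hspb : IsPullback s (𝟙 (U a)) e (μ a) := by
      have hid := isPullback_id_of_mono s e
      rwa [hse] at hid
    have hsummand : IsSummandInclusion s :=
      isSummandInclusion_of_isPullback (cofanLegSummand hcP a) hspb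
    exact Idx.base_change q gl t hmap (pullback.fst hmap gl) (pullback.snd hmap gl) s
      (horbP a) (horbX i) hQ (pullback.lift_fst _ _ _) (pullback.lift_snd _ _ _)
      hsummand hgl
  coprod_mem {A B A' B' X X'} f g ia ib ia' ib' h hXn hXn' hsq1 hsq2 hf hg := by
    obtain ⟨hX⟩ := hXn
    obtain ⟨hX'⟩ := hXn'
    obtain ⟨nA, mA, WA, ιA, VA, κA, horbA, horbA', ⟨hcA⟩, ⟨hcA'⟩, compA⟩ := hf
    obtain ⟨nB, mB, WB, ιB, VB, κB, horbB, horbB', ⟨hcB⟩, ⟨hcB'⟩, compB⟩ := hg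
    refine extMem_intro Idx h (I := Fin nA ⊕ Fin nB)
      (W := Sum.elim WA WB)
      (ι := fun p => Sum.rec (motive := fun p => Sum.elim WA WB p ⟶ X)
        (fun i => ιA i ≫ ia) (fun i' => ιB i' ≫ ib) p)
      (fun p => by cases p <;> [exact horbA _; exact horbB _])
      (combineCofan hcA hcB hX)
      (J := Fin mA ⊕ Fin mB)
      (V := Sum.elim VA VB)
      (κ := fun p => Sum.rec (motive := fun p => Sum.elim VA VB p ⟶ X')
        (fun j => κA j ≫ ia') (fun j' => κB j' ≫ ib') p)
      (fun p => by cases p <;> [exact horbA' _; exact horbB' _])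
      (combineCofan hcA' hcB' hX') ?_
    rintro (i | i')
    · obtain ⟨j, gA, hgA, hfacA⟩ := compA i
      refine ⟨Sum.inl j, gA, hgA, ?_⟩
      show gA ≫ κA j ≫ ia' = (ιA i ≫ ia) ≫ h
      rw [← Category.assoc, hfacA, Category.assoc, Category.assoc, ← hsq1,
        ← Category.assoc]
    · obtain ⟨j, gB, hgB, hfacB⟩ := compB i'
      refine ⟨Sum.inr j, gB, hgB, ?_⟩
      show gB ≫ κB j ≫ ib' = (ιB i' ≫ ib) ≫ h
      rw [← Category.assoc, hfacB, Category.assoc, Category.assoc, ← hsq2,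
        ← Category.assoc]
  fold_mem {U U'} α hα := by
    obtain ⟨n, W, k, ι', ι, horb, ⟨hc'⟩, ⟨hc⟩, hcompat⟩ := hα
    refine extMem_intro Idx α (I := Σ i : Fin n, Fin (k i)) (W := fun p => W p.1)
      (ι := ι) (fun p => horb p.1) hc (J := Fin n) horb hc' ?_
    intro p
    exact ⟨p.1, 𝟙 (W p.1), Idx.iso_mem _ (horb p.1) (horb p.1) inferInstance,
      by rw [Category.id_comp, ← hcompat p]⟩

end Main3

section Main4

variable {D : Type u} [Category.{v} D] [HasPullbacks D] [HasFiniteCoproducts D]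
  [FinitaryExtensive D] {S : CoprodCompletion D}

theorem extMem_restrict_iff (hat : Atomic S) (J : FinIndexingSystem S) {X Y : D}
    (f : X ⟶ Y) : ExtMem (Restrict J) f ↔ J.mem f := by
  constructor
  · rintro ⟨n, m, W, ι, V, κ, horb, horb', ⟨hc⟩, ⟨hc'⟩, hcomp⟩
    refine finmem_of_components J f hc ?_
    intro i
    obtain ⟨j, g, ⟨-, -, hgJ⟩, hfac⟩ := hcomp i
    rw [← hfac]
    exact J.comp_mem g (κ j) hgJ (finmem_summand J (cofanLegSummand hc' j))
  · intro hf
    obtain ⟨n, W, ι, horb, ⟨hc⟩⟩ := S.decomp X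
    obtain ⟨m, V, κ, horb', ⟨hc'⟩⟩ := S.decomp Y
    refine extMem_intro (Restrict J) f horb hc horb' hc' ?_
    intro i
    obtain ⟨j, g, hfac⟩ := connected' S (horb i) V κ hc' (ι i ≫ f)
    exact ⟨j, g, ⟨horb i, horb' j, finmem_component J hf hc hc' hfac⟩, hfac⟩

theorem restrict_extend_iff (hat : Atomic S) (Idx : IndexingSystem S) {V W : D}
    (f : V ⟶ W) : (Restrict (Extend hat Idx)).mem f ↔ Idx.mem f := by
  constructor
  · rintro ⟨hV, hW, hExt⟩
    have hcomp := extMem_transfer hat Idx hExt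
      (I := Fin 1) (W := fun _ => V) (ι := fun _ => 𝟙 V) (fun _ => hV)
      (singletonCofanColimit V)
      (J := Fin 1) (V := fun _ => W) (κ := fun _ => 𝟙 W) (fun _ => hW)
      (singletonCofanColimit W) 0
    obtain ⟨j, g, hg, hfac⟩ := hcomp
    simp only [Category.comp_id, Category.id_comp] at hfac
    rwa [hfac] at hg
  · intro hmem
    refine ⟨(Idx.orbits f hmem).1, (Idx.orbits f hmem).2, ?_⟩
    refine extMem_intro Idx f (I := Fin 1) (W := fun _ => V) (ι := fun _ => 𝟙 V)
      (fun _ => (Idx.orbits f hmem).1) (singletonCofanColimit V)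
      (J := Fin 1) (V := fun _ => W) (κ := fun _ => 𝟙 W)
      (fun _ => (Idx.orbits f hmem).2) (singletonCofanColimit W) ?_
    intro i
    exact ⟨0, f, hmem, by simp⟩

theorem FinIndexingSystem.ext' {J₁ J₂ : FinIndexingSystem S}
    (h : ∀ {V W : D} (f : V ⟶ W), J₁.mem f ↔ J₂.mem f) : J₁ = J₂ := by
  obtain ⟨m₁, a₁, b₁, c₁, d₁, e₁⟩ := J₁
  obtain ⟨m₂, a₂, b₂, c₂, d₂, e₂⟩ := J₂
  have hm : @m₁ = @m₂ := by
    funext V W f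
    exact propext (h f)
  subst hm
  rfl

theorem IndexingSystem.ext' {I₁ I₂ : IndexingSystem S}
    (h : ∀ {V W : D} (f : V ⟶ W), I₁.mem f ↔ I₂.mem f) : I₁ = I₂ := by
  obtain ⟨m₁, a₁, b₁, c₁, d₁⟩ := I₁
  obtain ⟨m₂, a₂, b₂, c₂, d₂⟩ := I₂
  have hm : @m₁ = @m₂ := by
    funext V W f
    exact propext (h f)
  subst hm
  rfl

end Main4

/-- For an atomic orbital category `𝒯` there is an
inclusion-preserving bijection between `𝒯`-indexing systems and the subcategories
`Ī` of `Fin_𝒯` satisfying (1)–(3) above, which restricts `Ī` to the morphisms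
between orbits. -/
theorem indexing_systems_bijection
    {D : Type u} [Category.{v} D] [HasPullbacks D] [HasFiniteCoproducts D]
    [FinitaryExtensive D]
    (S : CoprodCompletion D) (_hatomic : Atomic S) :
    ∃ e : FinIndexingSystem S ≃ IndexingSystem S,
      (∀ (J : FinIndexingSystem S) {V W : D} (f : V ⟶ W),
          S.IsOrbit V → S.IsOrbit W → ((e J).mem f ↔ J.mem f)) ∧
      (∀ J₁ J₂ : FinIndexingSystem S,
          (∀ {V W : D} (f : V ⟶ W), J₁.mem f → J₂.mem f) ↔
          (∀ {V W : D} (f : V ⟶ W), (e J₁).mem f → (e J₂).mem f)) := by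
  refine ⟨⟨Restrict, Extend _hatomic, ?_, ?_⟩, ?_, ?_⟩
  · intro J
    exact FinIndexingSystem.ext' (fun f => extMem_restrict_iff _hatomic J f)
  · intro Idx
    exact IndexingSystem.ext' (fun f => restrict_extend_iff _hatomic Idx f)
  · intro J V W f hV hW
    show (S.IsOrbit V ∧ S.IsOrbit W ∧ J.mem f) ↔ J.mem f
    exact ⟨fun h => h.2.2, fun h => ⟨hV, hW, h⟩⟩
  · intro J₁ J₂
    constructor
    · intro h V W f hf
      exact ⟨hf.1, hf.2.1, h f hf.2.2⟩
    · intro h V W f hm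
      have h1 : ExtMem (Restrict J₁) f := (extMem_restrict_iff _hatomic J₁ f).mpr hm
      have h2 : ExtMem (Restrict J₂) f :=
        extMem_mono (fun g hg => h g hg) h1
      exact (extMem_restrict_iff _hatomic J₂ f).mp h2

end ParamOperads
end

section
/- Let G be a finite group. There is a bijection between G-indexing systems in the sense of Blumberg–Hill (collections I(H) of finite H-sets for each subgroup H ≤ G, containing all trivial H-sets, closed under isomorphism, restriction, conjugation, subobjects, binary coproducts, and admissible induction: if U ∈ I(K) and H/K ∈ I(H) then Ind_K^H U ∈ I(H)) and wide subcategories ℐ of the orbit category O_G containing all isomorphisms, closed under composition, and closed under base-change along summand inclusions in finite G-sets. The bijection declares f : V → W ≅ G/H to lie in ℐ iff V, viewed as an H-set via F_H ≃ (F_G)^{/(G/H)}, lies in I(H). -/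
open CategoryTheory CategoryTheory.Limits

universe u v

namespace ParamOperads

variable {D : Type u} [Category.{v} D]

/-- The category of finite `G`-sets. -/
abbrev FinGSet (G : Type) [Group G] := Action FintypeCat (MonCat.of G)

/-- A finite `G`-set is an orbit when the action is transitive (and it is nonempty). -/
def IsTransitive {G : Type} [Group G] (X : FinGSet G) : Prop :=
  Nonempty X.V ∧ ∀ x y : X.V, ∃ g : G, ConcreteCategory.hom (C := FintypeCat) (X.ρ g) x = y

/-- A `G`-indexing system in the sense of Blumberg–Hill, encoded via the equivalence
`F_H ≃ (F_G)^{/(G/H)}`: the data assigns to each orbit `W ≅ G/H` the collection of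
finite `G`-sets `p : X ⟶ W` over it (i.e. finite `H`-sets), containing all trivial
`H`-sets (fold maps), closed under isomorphism, restriction (pullback along maps of
orbits), conjugation (composition with isomorphisms of orbits), subobjects (summand
inclusions), binary coproducts, and admissible induction (composition with a member
map of orbits). -/
structure GIndexingSystem (G : Type) [Group G] [Fintype G] where
  mem : ∀ {X W : FinGSet G}, (X ⟶ W) → Prop
  target_orbit : ∀ {X W : FinGSet G} (p : X ⟶ W), mem p → IsTransitive W
  trivial_mem : ∀ {X W : FinGSet G} (p : X ⟶ W), IsTransitive W →
      IsFoldMapP IsTransitive p → mem p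
  iso_mem : ∀ {X X' W : FinGSet G} (e : X ≅ X') (p : X' ⟶ W),
      mem p → mem (e.hom ≫ p)
  res_mem : ∀ {P X V W : FinGSet G} (p₁ : P ⟶ V) (p₂ : P ⟶ X)
      (q : V ⟶ W) (p : X ⟶ W), IsTransitive V → IsTransitive W →
      IsPullback p₁ p₂ q p → mem p → mem p₁
  conj_mem : ∀ {X W W' : FinGSet G} (p : X ⟶ W) (e : W ≅ W'),
      IsTransitive W' → mem p → mem (p ≫ e.hom)
  sub_mem : ∀ {X' X W : FinGSet G} (j : X' ⟶ X) (p : X ⟶ W),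
      IsSummandInclusion j → mem p → mem (j ≫ p)
  coprod_mem : ∀ {A B X W : FinGSet G} (ia : A ⟶ X) (ib : B ⟶ X) (h : X ⟶ W),
      IsTransitive W → Nonempty (IsColimit (BinaryCofan.mk ia ib)) →
      mem (ia ≫ h) → mem (ib ≫ h) → mem h
  ind_mem : ∀ {U V W : FinGSet G} (p : U ⟶ V) (q : V ⟶ W),
      IsTransitive V → IsTransitive W → mem p → mem q → mem (p ≫ q)

/-- A wide subcategory of the orbit category `O_G`: a class of morphisms between
transitive finite `G`-sets containing all isomorphisms, closed under composition
and under base-change along summand inclusions in finite `G`-sets. -/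
structure OrbitSubcategory (G : Type) [Group G] [Fintype G] where
  mem : ∀ {V W : FinGSet G}, (V ⟶ W) → Prop
  orbits : ∀ {V W : FinGSet G} (f : V ⟶ W), mem f → IsTransitive V ∧ IsTransitive W
  iso_mem : ∀ {V W : FinGSet G} (f : V ⟶ W), IsTransitive V → IsTransitive W →
      IsIso f → mem f
  comp_mem : ∀ {V W X : FinGSet G} (f : V ⟶ W) (g : W ⟶ X),
      mem f → mem g → mem (f ≫ g)
  base_change : ∀ {W' V' W V P : FinGSet G} (g : W' ⟶ V') (f : W ⟶ V)
      (a : W' ⟶ W) (b : V' ⟶ V) (p₁ : P ⟶ V') (p₂ : P ⟶ W) (s : W' ⟶ P),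
      IsTransitive W' → IsTransitive V' →
      IsPullback p₁ p₂ b f → s ≫ p₁ = g → s ≫ p₂ = a → IsSummandInclusion s →
      mem f → mem g

/-!
Finite `G`-sets form a Galois category whose connected objects are the orbits, and every finite
`G`-set is the coproduct of its orbits. Hence an indexing system is determined by its members
`V ⟶ W` between orbits: closure under summands and binary coproducts, together with the empty
fold map, recovers `J.mem p` from the restrictions of `p` to the orbits of its source. Conversely,
an orbit subcategory `S` is extended to finite `G`-sets over an orbit by declaring `p` admissible
when all its orbit restrictions lie in `S`; restriction is then an instance of base change along
the summand inclusion of an orbit into a pullback, and admissible induction is composition.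
-/

open PreGaloisCategory

section FoldMap

variable (Orb : D → Prop)

theorem isFoldMapP_of_isIso {V W : D} (f : V ⟶ W) [IsIso f] (hV : Orb V) :
    IsFoldMapP Orb f :=
  have : Unique (Σ _ : Fin 1, Fin 1) := (Equiv.sigmaUnique (Fin 1) fun _ => Fin 1).unique
  ⟨1, fun _ => V, fun _ => 1, fun _ => f, fun _ => 𝟙 V, fun _ => hV,
    ⟨Cofan.isColimitMkOfUnique (asIso f) _⟩, ⟨Cofan.isColimitMkOfUnique (Iso.refl V) _⟩,
    fun _ => Category.id_comp f⟩

theorem isFoldMapP_of_isInitial {X W : D} (p : X ⟶ W) (hX : IsInitial X) (hW : Orb W) :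
    IsFoldMapP Orb p :=
  ⟨1, fun _ => W, fun _ => 0, fun _ => 𝟙 W, fun q => q.2.elim0, fun _ => hW,
    ⟨Cofan.isColimitMkOfUnique (Iso.refl W) _⟩,
    ⟨Cofan.IsColimit.mk _ (fun s => hX.to s.pt) (fun _ q => q.2.elim0)
      (fun _ _ _ => hX.hom_ext _ _)⟩,
    fun q => q.2.elim0⟩

end FoldMap

section GaloisCategory

variable {C : Type u} [Category.{v} C]

theorem isIso_of_mono_of_isConnected {X Y : C} [IsConnected X] [IsConnected Y]
    (i : X ⟶ Y) [Mono i] : IsIso i :=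
  IsConnected.noTrivialComponent X i IsConnected.notInitial

section FiberFunctor

variable [PreGaloisCategory C] (F : C ⥤ FintypeCat.{w}) [FiberFunctor F]

theorem card_fiber_eq_add_of_isColimit {X Y Z : C} {i : X ⟶ Z} {u : Y ⟶ Z}
    (hc : IsColimit (BinaryCofan.mk i u)) :
    Nat.card (F.obj Z) = Nat.card (F.obj X) + Nat.card (F.obj Y) := by
  rw [← card_fiber_coprod_eq_sum]
  exact card_fiber_eq_of_iso F (hc.coconePointUniqueUpToIso (colimit.isColimit _))

theorem exists_lift_of_map_eq {V X Y : C} [IsConnected V] (f : V ⟶ X) (i : Y ⟶ X) [Mono i]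
    {v : F.obj V} {y : F.obj Y} (h : F.map f v = F.map i y) : ∃ g : V ⟶ Y, g ≫ i = f := by
  -- the pullback of `i` along `f` is a subobject of the connected `V` with nonempty fiber
  have : IsIso (pullback.fst f i) :=
    IsConnected.noTrivialComponent _ _
      (not_initial_of_inhabited F ((fiberPullbackEquiv F f i).symm ⟨(v, y), h⟩))
  exact ⟨inv (pullback.fst f i) ≫ pullback.snd f i, by simp [pullback.condition]⟩

end FiberFunctor

variable [GaloisCategory C]

theorem isSummandInclusion_iff_mono {A B : C} (i : A ⟶ B) : IsSummandInclusion i ↔ Mono i :=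
  ⟨fun ⟨_, _, ⟨hc⟩⟩ => MonoCoprod.binaryCofan_inl _ hc,
    fun _ => monoInducesIsoOnDirectSummand i⟩

theorem exists_lift_to_cofan_inj {V : C} [IsConnected V] {ι : Type*} [Finite ι] {Z : ι → C}
    {c : Cofan Z} (hc : IsColimit c) (f : V ⟶ c.pt) :
    ∃ (i : ι) (g : V ⟶ Z i), g ≫ c.inj i = f := by
  classical
  have := Fintype.ofFinite ι
  let F := GaloisCategory.getFiberFunctor C
  obtain ⟨⟨i⟩, z, hz⟩ := Limits.FintypeCat.jointly_surjective _ _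
    (isColimitOfPreserves F hc) (F.map f (Classical.arbitrary _))
  have : Mono (c.inj i) := MonoCoprod.mono_inj _ _ hc i
  exact ⟨i, exists_lift_of_map_eq F f (c.inj i) hz.symm⟩

theorem exists_lift_of_isColimit_binaryCofan {V A B X : C} [IsConnected V] {ia : A ⟶ X}
    {ib : B ⟶ X} (hc : IsColimit (BinaryCofan.mk ia ib)) (f : V ⟶ X) :
    (∃ g : V ⟶ A, g ≫ ia = f) ∨ ∃ g : V ⟶ B, g ≫ ib = f := by
  obtain ⟨⟨⟩, g, hg⟩ := exists_lift_to_cofan_inj hc f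
  exacts [Or.inl ⟨g, hg⟩, Or.inr ⟨g, hg⟩]

theorem exists_lift_to_connected_subobject {V X : C} [IsConnected V] (f : V ⟶ X) :
    ∃ (Y : C) (i : Y ⟶ X) (g : V ⟶ Y), IsConnected Y ∧ Mono i ∧ g ≫ i = f := by
  let F := GaloisCategory.getFiberFunctor C
  obtain ⟨v⟩ := nonempty_fiber_of_isConnected F V
  obtain ⟨Y, i, y, hy, hY, hi⟩ := fiber_in_connected_component F X (F.map f v)
  obtain ⟨g, hg⟩ := exists_lift_of_map_eq F f i hy.symm
  exact ⟨Y, i, g, hY, hi, hg⟩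

theorem isIso_comp_of_isFoldMapP {X W V : C} [IsConnected W] [IsConnected V] {p : X ⟶ W}
    (hp : IsFoldMapP PreGaloisCategory.IsConnected p) (j : V ⟶ X) [Mono j] :
    IsIso (j ≫ p) := by
  obtain ⟨n, Wf, k, ι', ι, hconn, ⟨hc'⟩, ⟨hc⟩, hι⟩ := hp
  obtain ⟨q, g, rfl⟩ := exists_lift_to_cofan_inj hc j
  have := hconn q.1
  have : Mono g := mono_of_mono g ((Cofan.mk X ι).inj q)
  have : Mono (ι' q.1) := MonoCoprod.mono_inj _ _ hc' q.1
  have : IsIso g := isIso_of_mono_of_isConnected g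
  have : IsIso (ι' q.1) := isIso_of_mono_of_isConnected _
  rw [cofan_mk_inj, Category.assoc, hι q]
  infer_instance

end GaloisCategory

section FinGSet

variable {G : Type} [Group G]

theorem isTransitive_iff_isConnected (X : FinGSet G) : IsTransitive X ↔ IsConnected X := by
  constructor
  · rintro ⟨_, htrans⟩
    have : MulAction.IsPretransitive G X.V := ⟨htrans⟩
    exact (FintypeCat.Action.isConnected_iff_transitive _ X).2 this
  · intro hX
    have := FintypeCat.Action.pretransitive_of_isConnected _ X
    exact ⟨nonempty_fiber_of_isConnected (Action.forget _ _) X, MulAction.exists_smul_eq G⟩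

theorem isTransitive_eq_isConnected :
    (IsTransitive : FinGSet G → Prop) = PreGaloisCategory.IsConnected :=
  funext fun X => propext (isTransitive_iff_isConnected X)

variable [Fintype G]

namespace GIndexingSystem

theorem ext {J₁ J₂ : GIndexingSystem G}
    (h : ∀ {X W : FinGSet G} (p : X ⟶ W), J₁.mem p ↔ J₂.mem p) : J₁ = J₂ := by
  obtain ⟨m₁⟩ := J₁
  obtain ⟨m₂⟩ := J₂
  obtain rfl : @m₁ = @m₂ := by
    funext X W p
    exact propext (h p)
  rfl

theorem mem_of_forall_mono (J : GIndexingSystem G) {X W : FinGSet G} (p : X ⟶ W)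
    (hW : IsTransitive W)
    (h : ∀ (V : FinGSet G) (j : V ⟶ X), IsTransitive V → Mono j → J.mem (j ≫ p)) :
    J.mem p := by
  let F := Action.forget FintypeCat (MonCat.of G)
  induction hn : Nat.card (F.obj X) using Nat.strong_induction_on generalizing X with
  | _ n ih =>
  rcases isEmpty_or_nonempty (F.obj X) with hX | hX
  · obtain ⟨hX⟩ := (initial_iff_fiber_empty F X).2 hX
    exact J.trivial_mem p hW (isFoldMapP_of_isInitial _ p hX hW)
  obtain ⟨x⟩ := hX
  obtain ⟨Y, i, -, -, hY, hi⟩ := fiber_in_connected_component F X x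
  obtain ⟨Z, u, ⟨hc⟩⟩ := monoInducesIsoOnDirectSummand i
  have : Mono u := MonoCoprod.binaryCofan_inr _ hc
  have hZ : Nat.card (F.obj Z) < n := by
    have := non_zero_card_fiber_of_not_initial F Y hY.notInitial
    rw [← hn, card_fiber_eq_add_of_isColimit F hc]
    omega
  refine J.coprod_mem i u p hW ⟨hc⟩ (h Y i ((isTransitive_iff_isConnected Y).2 hY) hi) ?_
  refine ih _ hZ (u ≫ p) (fun V j hV _ => ?_) rfl
  rw [← Category.assoc]
  exact h V (j ≫ u) hV inferInstance

theorem mem_iff_forall_mono (J : GIndexingSystem G) {X W : FinGSet G} (p : X ⟶ W) :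
    J.mem p ↔ IsTransitive W ∧
      ∀ (V : FinGSet G) (j : V ⟶ X), IsTransitive V → Mono j → J.mem (j ≫ p) :=
  ⟨fun hp => ⟨J.target_orbit p hp,
      fun _ j _ _ => J.sub_mem j p ((isSummandInclusion_iff_mono j).2 ‹_›) hp⟩,
    fun h => J.mem_of_forall_mono p h.1 h.2⟩

def toOrbitSubcategory (J : GIndexingSystem G) : OrbitSubcategory G where
  mem {V W} f := IsTransitive V ∧ IsTransitive W ∧ J.mem f
  orbits _ h := ⟨h.1, h.2.1⟩
  iso_mem f hV hW _ := ⟨hV, hW, J.trivial_mem f hW (isFoldMapP_of_isIso _ f hV)⟩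
  comp_mem f g hf hg := ⟨hf.1, hg.2.1, J.ind_mem f g hf.2.1 hg.2.1 hf.2.2 hg.2.2⟩
  base_change _ f _ b p₁ p₂ s hW' hV' hpb hs₁ _ hs hf :=
    ⟨hW', hV', hs₁ ▸ J.sub_mem s p₁ hs (J.res_mem p₁ p₂ b f hV' hf.2.1 hpb hf.2.2)⟩

end GIndexingSystem

namespace OrbitSubcategory

theorem ext {S₁ S₂ : OrbitSubcategory G}
    (h : ∀ {V W : FinGSet G} (f : V ⟶ W), S₁.mem f ↔ S₂.mem f) : S₁ = S₂ := by
  obtain ⟨m₁⟩ := S₁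
  obtain ⟨m₂⟩ := S₂
  obtain rfl : @m₁ = @m₂ := by
    funext V W f
    exact propext (h f)
  rfl

theorem mem_comp_of_isPullback (S : OrbitSubcategory G) {P X V W V₀ : FinGSet G}
    {p₁ : P ⟶ V} {p₂ : P ⟶ X} {q : V ⟶ W} {p : X ⟶ W} (hpb : IsPullback p₁ p₂ q p)
    (hV : IsTransitive V)
    (hp : ∀ (O : FinGSet G) (i : O ⟶ X), IsTransitive O → Mono i → S.mem (i ≫ p))
    (j : V₀ ⟶ P) [Mono j] (hV₀ : IsTransitive V₀) : S.mem (j ≫ p₁) := by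
  have := (isTransitive_iff_isConnected V₀).1 hV₀
  -- `j ≫ p₂` lands in an orbit `O` of `X`, and `V₀` is then a summand of the pullback of
  -- `i ≫ p ∈ S` along `q`.
  obtain ⟨O, i, g, hO, hi, hg⟩ := exists_lift_to_connected_subobject (j ≫ p₂)
  let s : V₀ ⟶ pullback q (i ≫ p) :=
    pullback.lift (j ≫ p₁) g (by rw [Category.assoc, hpb.w, reassoc_of% hg])
  have hsj : s ≫ hpb.lift (pullback.fst _ _) (pullback.snd _ _ ≫ i)
      (by rw [pullback.condition, Category.assoc]) = j :=
    hpb.hom_ext (by rw [Category.assoc, IsPullback.lift_fst]; exact pullback.lift_fst _ _ _)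
      (by rw [Category.assoc, IsPullback.lift_snd, pullback.lift_snd_assoc, hg])
  have : Mono s := mono_of_mono_fac hsj
  exact S.base_change _ (i ≫ p) _ q _ _ s hV₀ hV (IsPullback.of_hasPullback _ _)
    (pullback.lift_fst _ _ _) rfl ((isSummandInclusion_iff_mono s).2 this)
    (hp O i ((isTransitive_iff_isConnected O).2 hO) hi)

def toGIndexingSystem (S : OrbitSubcategory G) : GIndexingSystem G where
  mem {X W} p := IsTransitive W ∧
    ∀ (V : FinGSet G) (j : V ⟶ X), IsTransitive V → Mono j → S.mem (j ≫ p)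
  target_orbit _ h := h.1
  trivial_mem p hW hp := ⟨hW, fun V j hV _ => by
    have := (isTransitive_iff_isConnected V).1 hV
    have := (isTransitive_iff_isConnected _).1 hW
    exact S.iso_mem _ hV hW
      (isIso_comp_of_isFoldMapP (isTransitive_eq_isConnected (G := G) ▸ hp) j)⟩
  iso_mem e p hp := ⟨hp.1, fun V j hV _ => by
    simpa using hp.2 V (j ≫ e.hom) hV inferInstance⟩
  res_mem _ _ _ _ hV _ hpb hp :=
    ⟨hV, fun _ j hV₀ _ => S.mem_comp_of_isPullback hpb hV hp.2 j hV₀⟩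
  conj_mem p e hW' hp := ⟨hW', fun V j hV _ => by
    simpa using S.comp_mem _ _ (hp.2 V j hV ‹_›) (S.iso_mem e.hom hp.1 hW' inferInstance)⟩
  sub_mem j p hj hp := ⟨hp.1, fun V j₀ hV _ => by
    have := (isSummandInclusion_iff_mono j).1 hj
    simpa using hp.2 V (j₀ ≫ j) hV inferInstance⟩
  coprod_mem ia ib h hW hc ha hb := ⟨hW, fun V j hV _ => by
    have := (isTransitive_iff_isConnected V).1 hV
    obtain ⟨hc⟩ := hc
    rcases exists_lift_of_isColimit_binaryCofan hc j with ⟨g, rfl⟩ | ⟨g, rfl⟩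
    · have : Mono g := mono_of_mono g ia
      simpa using ha.2 V g hV this
    · have : Mono g := mono_of_mono g ib
      simpa using hb.2 V g hV this⟩
  ind_mem p q hV _ hp hq := ⟨hq.1, fun V₀ j hV₀ _ => by
    have hqS : S.mem q := by simpa using hq.2 _ (𝟙 _) hV inferInstance
    simpa using S.comp_mem _ q (hp.2 V₀ j hV₀ ‹_›) hqS⟩

theorem toOrbitSubcategory_toGIndexingSystem (S : OrbitSubcategory G) :
    S.toGIndexingSystem.toOrbitSubcategory = S := by
  refine ext fun {V W} f => ⟨fun h => ?_, fun hf => ?_⟩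
  · simpa using h.2.2.2 V (𝟙 V) h.1 inferInstance
  · obtain ⟨hV, hW⟩ := S.orbits f hf
    refine ⟨hV, hW, hW, fun V₀ j hV₀ _ => ?_⟩
    have := (isTransitive_iff_isConnected V).1 hV
    have := (isTransitive_iff_isConnected V₀).1 hV₀
    exact S.comp_mem j f (S.iso_mem j hV₀ hV (isIso_of_mono_of_isConnected j)) hf

end OrbitSubcategory

theorem GIndexingSystem.toGIndexingSystem_toOrbitSubcategory (J : GIndexingSystem G) :
    J.toOrbitSubcategory.toGIndexingSystem = J := by
  refine GIndexingSystem.ext fun p => ?_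
  rw [J.mem_iff_forall_mono]
  refine and_congr_right fun hW => forall₂_congr fun V j => imp_congr_right fun hV => ?_
  exact imp_congr_right fun _ => ⟨fun h => h.2.2, fun h => ⟨hV, hW, h⟩⟩

def indexingSystemEquivOrbitSubcategory : GIndexingSystem G ≃ OrbitSubcategory G where
  toFun := GIndexingSystem.toOrbitSubcategory
  invFun := OrbitSubcategory.toGIndexingSystem
  left_inv := GIndexingSystem.toGIndexingSystem_toOrbitSubcategory
  right_inv := OrbitSubcategory.toOrbitSubcategory_toGIndexingSystem

end FinGSet

/-- For a finite group `G`, there is a bijection between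
`G`-indexing systems in the sense of Blumberg–Hill and wide subcategories of the
orbit category `O_G` closed under composition and base-change along summand
inclusions; it is determined by declaring `f : V ⟶ W` between orbits to lie in `ℐ`
iff `f`, viewed as a finite `H`-set over `W ≅ G/H`, lies in `I(H)`. -/
theorem blumberg_hill_indexing_systems_bijection (G : Type) [Group G] [Fintype G] :
    ∃ e : GIndexingSystem G ≃ OrbitSubcategory G,
      ∀ (J : GIndexingSystem G) {V W : FinGSet G} (f : V ⟶ W),
        IsTransitive V → IsTransitive W → ((e J).mem f ↔ J.mem f) :=
  ⟨indexingSystemEquivOrbitSubcategory, fun _ _ _ _ hV hW =>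
    ⟨fun h => h.2.2, fun h => ⟨hV, hW, h⟩⟩⟩

end ParamOperads
end

section
/- Let C be a cartesian closed category with finite colimits and a terminal object *. Given maps x_0 → x_1, y_0 → y_1, z_0 → z_1 and an 'L-equivalence' x_1/x_0 → y_1/y_0 (an isomorphism of cofibers, where a/b denotes the cofiber b → a → a/b with * glued in), there is a natural isomorphism ((x_1 × z_1) / (x_0 × z_1 ∪_{x_0 × z_0} x_1 × z_0)) ≅ ((x_1 × z_1)/(x_0 × z_1)) / ((x_1 × z_0)/(x_0 × z_0)); consequently the pushout product with a fixed arrow z_0 → z_1 preserves L-equivalences. -/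
/-!
The cofiber of a map `q : B ∪_A D ⟶ E` out of a pushout is the cofiber of the induced map
`D/A ⟶ E/B`. This comes from pasting pushout squares: `D/A ≅ (B ∪_A D)/B`, and for
`B ⟶ P ⟶ E` the cofiber `E/P` is the cofiber of `P/B ⟶ E/B`. For `q` the pushout product of
`f` and `g` this is the isomorphism of the statement, and it exhibits the cofiber of `f □ g` as a
pushout of the cofibers of `f × z₀` and `f × z₁`. Since `- × z` is a left adjoint, it preserves the
pushouts defining cofibers, so an L-equivalence `f ⟶ f'` induces isomorphisms between these
cofibers, hence between the cofibers of `f □ g` and `f' □ g`.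
-/

open CategoryTheory CategoryTheory.Limits

universe u v

namespace ParamOperads

variable {C : Type u} [Category.{v} C]

section
variable [HasTerminal C] [HasFiniteColimits C]

/-- The cofiber `a/b` of `f : b ⟶ a`: the pushout of `* ⟵ b ⟶ a`. -/
noncomputable def cof {b a : C} (f : b ⟶ a) : C :=
  pushout f (terminal.from b)

/-- Functoriality of cofibers: a commuting square induces a map of cofibers. -/
noncomputable def cofMap {b a b' a' : C} (f : b ⟶ a) (f' : b' ⟶ a')
    (u : b ⟶ b') (v : a ⟶ a') (h : f ≫ v = u ≫ f') : cof f ⟶ cof f' :=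
  pushout.map f (terminal.from b) f' (terminal.from b') v (𝟙 (⊤_ C)) u h (by simp)

variable [HasFiniteProducts C]

/-- The pushout product of `f : x₀ ⟶ x₁` and `g : z₀ ⟶ z₁`:
`x₀ × z₁ ∪_{x₀ × z₀} x₁ × z₀ ⟶ x₁ × z₁`. -/
noncomputable def pp {x₀ x₁ z₀ z₁ : C} (f : x₀ ⟶ x₁) (g : z₀ ⟶ z₁) :
    pushout (prod.map (𝟙 x₀) g) (prod.map f (𝟙 z₀)) ⟶ x₁ ⨯ z₁ :=
  pushout.desc (prod.map f (𝟙 z₁)) (prod.map (𝟙 x₁) g)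
    (by simp [prod.map_map])

end

end ParamOperads

namespace CategoryTheory.IsPushout

variable {C : Type u} [Category.{v} C]

theorem isIso_map_of_isIso {Z X Y P Z' X' Y' P' : C}
    {f : Z ⟶ X} {g : Z ⟶ Y} {inl : X ⟶ P} {inr : Y ⟶ P}
    {f' : Z' ⟶ X'} {g' : Z' ⟶ Y'} {inl' : X' ⟶ P'} {inr' : Y' ⟶ P'}
    (s : IsPushout f g inl inr) (s' : IsPushout f' g' inl' inr')
    (ez : Z ⟶ Z') (ex : X ⟶ X') (ey : Y ⟶ Y') [hez : IsIso ez] [hex : IsIso ex] [IsIso ey]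
    (φ : P ⟶ P')
    (hf : f ≫ ex = ez ≫ f') (hg : g ≫ ey = ez ≫ g')
    (hinl : inl ≫ φ = ex ≫ inl') (hinr : inr ≫ φ = ey ≫ inr') : IsIso φ := by
  have t : IsPushout f g (ex ≫ inl') (ey ≫ inr') :=
    s'.of_iso' (asIso ez) (asIso ex) (asIso ey) (Iso.refl _) hf.symm hg.symm
      (by simp) (by simp)
  obtain rfl : φ = (s.isoIsPushout _ _ t).hom := s.hom_ext (by simpa) (by simpa)
  infer_instance

end CategoryTheory.IsPushout

namespace ParamOperads

variable {C : Type u} [Category.{v} C]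

section Cofiber

variable [HasTerminal C] [HasFiniteColimits C]

noncomputable def cof.inl {b a : C} (f : b ⟶ a) : a ⟶ cof f :=
  pushout.inl f (terminal.from b)

noncomputable def cof.inr {b a : C} (f : b ⟶ a) : ⊤_ C ⟶ cof f :=
  pushout.inr f (terminal.from b)

lemma cof.isPushout {b a : C} (f : b ⟶ a) :
    IsPushout f (terminal.from b) (cof.inl f) (cof.inr f) :=
  IsPushout.of_hasPushout _ _

section
variable {b a b' a' : C} (f : b ⟶ a) (f' : b' ⟶ a') (u : b ⟶ b') (v : a ⟶ a')
  (h : f ≫ v = u ≫ f')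

@[simp]
lemma inl_cofMap : cof.inl f ≫ cofMap f f' u v h = v ≫ cof.inl f' :=
  pushout.inl_desc _ _ _

@[simp]
lemma inr_cofMap : cof.inr f ≫ cofMap f f' u v h = cof.inr f' :=
  (pushout.inr_desc _ _ _).trans (Category.id_comp _)

lemma cofMap_eq_of_source (u' : b ⟶ b') (h' : f ≫ v = u' ≫ f') :
    cofMap f f' u v h = cofMap f f' u' v h' :=
  rfl

lemma cofMap_comp {b'' a'' : C} (f'' : b'' ⟶ a'') (u' : b' ⟶ b'') (v' : a' ⟶ a'')
    (h' : f' ≫ v' = u' ≫ f'') :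
    cofMap f f' u v h ≫ cofMap f' f'' u' v' h' =
      cofMap f f'' (u ≫ u') (v ≫ v') (by rw [reassoc_of% h, h', Category.assoc]) :=
  (cof.isPushout f).hom_ext
    (by simp only [← Category.assoc, inl_cofMap]; simp only [Category.assoc, inl_cofMap])
    (by simp only [← Category.assoc, inr_cofMap])

end

lemma isIso_cofMap_of_isPushout {A B D P : C} {i : A ⟶ B} {j : A ⟶ D} {inl : B ⟶ P}
    {inr : D ⟶ P} (s : IsPushout i j inl inr) :
    IsIso (cofMap j inl i inr s.w.symm) := by
  have t := s.flip.paste_vert (cof.isPushout inl)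
  rw [terminal.comp_from] at t
  exact (cof.isPushout j).isIso_map_of_isIso t (𝟙 _) (𝟙 _) (𝟙 _) _
    (by simp) (by simp) (by simp) (by simp)

lemma isPushout_cof_comp {b p e : C} (α : b ⟶ p) (q : p ⟶ e) :
    IsPushout (cofMap α (α ≫ q) (𝟙 b) q (by simp)) (terminal.from (cof α))
      (cofMap (α ≫ q) q α (𝟙 e) (by simp)) (cof.inr q) := by
  have mid : IsPushout q (cof.inl α) (cof.inl (α ≫ q)) (cofMap α (α ≫ q) (𝟙 b) q (by simp)) :=
    IsPushout.of_left (by simpa using cof.isPushout (α ≫ q)) (by simp) (cof.isPushout α)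
  refine IsPushout.of_top (by simpa using cof.isPushout q) ?_ mid
  rw [cofMap_comp]
  refine (cof.isPushout α).hom_ext ?_ ?_
  · simpa using (cof.isPushout q).w
  · simp [← Category.assoc, Subsingleton.elim (terminal.from (⊤_ C)) (𝟙 _)]

lemma isPushout_cof_of_isPushout {A B D P E : C} {i : A ⟶ B} {j : A ⟶ D} {inl : B ⟶ P}
    {inr : D ⟶ P} (s : IsPushout i j inl inr) {m : B ⟶ E} {n : D ⟶ E} (q : P ⟶ E)
    (hm : inl ≫ q = m) (hn : inr ≫ q = n) :
    IsPushout (cofMap j m i n (by rw [← hm, ← hn, s.w_assoc])) (terminal.from (cof j))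
      (cofMap m q inl (𝟙 E) (by rw [Category.comp_id, hm])) (cof.inr q) := by
  subst hm hn
  have := isIso_cofMap_of_isPushout s
  have sq : IsPushout (cofMap j inl i inr s.w.symm) (terminal.from (cof j))
      (terminal.from (cof inl)) (𝟙 (⊤_ C)) :=
    IsPushout.of_horiz_isIso ⟨terminal.hom_ext _ _⟩
  simpa only [cofMap_comp, Category.comp_id, Category.id_comp] using
    sq.paste_horiz (isPushout_cof_comp inl q)

section Functor

variable {D : Type*} [Category D] [HasTerminal D] [HasFiniteColimits D] (F : C ⥤ D)

noncomputable def cofComparison {b a : C} (f : b ⟶ a)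
    [PreservesColimit (span f (terminal.from b)) F] : F.obj (cof f) ⟶ cof (F.map f) :=
  ((cof.isPushout f).map F).desc (cof.inl (F.map f)) (terminal.from _ ≫ cof.inr (F.map f))
    (by simpa using (cof.isPushout (F.map f)).w)

section
variable {b a : C} (f : b ⟶ a) [PreservesColimit (span f (terminal.from b)) F]

lemma map_inl_cofComparison : F.map (cof.inl f) ≫ cofComparison F f = cof.inl (F.map f) :=
  IsPushout.inl_desc _ _ _ _

lemma map_inr_cofComparison :
    F.map (cof.inr f) ≫ cofComparison F f = terminal.from _ ≫ cof.inr (F.map f) :=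
  IsPushout.inr_desc _ _ _ _

lemma isPushout_cofComparison :
    IsPushout (F.map (cof.inr f)) (terminal.from (F.obj (⊤_ C))) (cofComparison F f)
      (cof.inr (F.map f)) :=
  IsPushout.of_top' (by simpa using cof.isPushout (F.map f)) ((cof.isPushout f).map F)

end

theorem isIso_cofMap_map [PreservesColimitsOfShape WalkingSpan F] {b a b' a' : C} (f : b ⟶ a)
    (f' : b' ⟶ a') (u : b ⟶ b') (v : a ⟶ a') (h : f ≫ v = u ≫ f') [IsIso (cofMap f f' u v h)] :
    IsIso (cofMap (F.map f) (F.map f') (F.map u) (F.map v) (by simp only [← F.map_comp, h])) := by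
  refine (isPushout_cofComparison F f).isIso_map_of_isIso (isPushout_cofComparison F f')
    (𝟙 _) (F.map (cofMap f f' u v h)) (𝟙 _) _ (by simp [← F.map_comp]) (by simp) ?_ (by simp)
  refine ((cof.isPushout f).map F).hom_ext ?_ ?_
  · rw [reassoc_of% map_inl_cofComparison, inl_cofMap, ← F.map_comp_assoc, inl_cofMap,
      F.map_comp_assoc, map_inl_cofComparison]
  · rw [reassoc_of% map_inr_cofComparison, inr_cofMap, ← F.map_comp_assoc,
      inr_cofMap, map_inr_cofComparison]

end Functor

section Product

variable [HasBinaryProducts C] [CartesianMonoidalCategory C]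

noncomputable def prodFlipIsoProd (z : C) : prod.functor.flip.obj z ≅ prod.functor.obj z :=
  NatIso.ofComponents (fun x => prod.braiding x z) (fun f => braid_natural f (𝟙 z))

instance isLeftAdjoint_prod_functor_flip (z : C) [Closed z] :
    (prod.functor.flip.obj z).IsLeftAdjoint :=
  Functor.isLeftAdjoint_of_iso (prodFlipIsoProd z).symm

theorem isIso_cofMap_prodMap {x₀ x₁ y₀ y₁ : C} (f : x₀ ⟶ x₁) (f' : y₀ ⟶ y₁) (u₀ : x₀ ⟶ y₀)
    (u₁ : x₁ ⟶ y₁) (h : f ≫ u₁ = u₀ ≫ f') [IsIso (cofMap f f' u₀ u₁ h)] (z : C) [Closed z] :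
    IsIso (cofMap (prod.map f (𝟙 z)) (prod.map f' (𝟙 z)) (prod.map u₀ (𝟙 z))
      (prod.map u₁ (𝟙 z)) (by simp [prod.map_map, h])) :=
  isIso_cofMap_map (prod.functor.flip.obj z) f f' u₀ u₁ h

end Product

end Cofiber

/-- Let `C` be cartesian closed with finite colimits and a
terminal object. Then for `f : x₀ ⟶ x₁` and `g : z₀ ⟶ z₁` there is an isomorphism
`(x₁ × z₁)/(x₀ × z₁ ∪_{x₀ × z₀} x₁ × z₀) ≅ ((x₁ × z₁)/(x₀ × z₁)) / ((x₁ × z₀)/(x₀ × z₀))`,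
and consequently the pushout product with a fixed arrow `g : z₀ ⟶ z₁` preserves
L-equivalences (squares inducing an isomorphism on cofibers). -/
theorem pushout_product_preserves_L_equivalences
    [HasTerminal C] [HasFiniteColimits C] [HasFiniteProducts C] [CartesianMonoidalCategory C] [MonoidalClosed C]
    {x₀ x₁ z₀ z₁ y₀ y₁ : C} (f : x₀ ⟶ x₁) (f' : y₀ ⟶ y₁) (g : z₀ ⟶ z₁)
    -- the L-equivalence `(x₀ → x₁) ⟶ (y₀ → y₁)` :
    (u₀ : x₀ ⟶ y₀) (u₁ : x₁ ⟶ y₁) (hsq : f ≫ u₁ = u₀ ≫ f')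
    (hLE : IsIso (cofMap f f' u₀ u₁ hsq))
    -- the induced comparison map on the pushout-product domains :
    (w : pushout (prod.map (𝟙 x₀) g) (prod.map f (𝟙 z₀)) ⟶
         pushout (prod.map (𝟙 y₀) g) (prod.map f' (𝟙 z₀)))
    (hcomm : pp f g ≫ prod.map u₁ (𝟙 z₁) = w ≫ pp f' g) :
    Nonempty (cof (pp f g) ≅
        cof (cofMap (prod.map f (𝟙 z₀)) (prod.map f (𝟙 z₁))
          (prod.map (𝟙 x₀) g) (prod.map (𝟙 x₁) g) (by simp [prod.map_map]))) ∧
    IsIso (cofMap (pp f g) (pp f' g) w (prod.map u₁ (𝟙 z₁)) hcomm) := by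
  have K := isPushout_cof_of_isPushout (.of_hasPushout _ _) (pp f g)
    (pushout.inl_desc _ _ _) (pushout.inr_desc _ _ _)
  have K' := isPushout_cof_of_isPushout (.of_hasPushout _ _) (pp f' g)
    (pushout.inl_desc _ _ _) (pushout.inr_desc _ _ _)
  refine ⟨⟨K.isoPushout⟩, ?_⟩
  refine K.isIso_map_of_isIso K' _ _ (𝟙 _) _ ?_ (by simp) ?_ (by simp)
    (hez := isIso_cofMap_prodMap f f' u₀ u₁ hsq z₀)
    (hex := isIso_cofMap_prodMap f f' u₀ u₁ hsq z₁)
  · simp only [cofMap_comp, prod.map_map, Category.id_comp, Category.comp_id]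
  · simp only [cofMap_comp, Category.id_comp, Category.comp_id]
    exact cofMap_eq_of_source _ _ _ _ _ _ _

end ParamOperads
end
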